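/- arXiv:1005.5047 — 3 statements merged into one kernel-verified Lean document; each statement's English description precedes it below -/
import Mathlib

section
/- Let ν : ℝ → ℂ be continuous, integrable, with ∫_ℝ |ν(μ)| |μ| dμ < ∞. Define α(λ) = exp(∫_ℝ ν(μ)/(μ−λ) dμ) for λ ∈ ℂ with Im λ > 0. Then α(λ) = 1 + α₁/λ + O(1/λ²) as |λ| → ∞ along the ray λ = it, t → +∞, where α₁ = −∫_ℝ ν(μ) dμ. -/
open Real Complex MeasureTheory Filter

/-!
Write `g(λ) = ∫ ν(μ)/(μ - λ) dμ`. Since `|μ - λ| ≥ |Im λ|`, `|g(λ)| ≤ ‖ν‖₁/|Im λ|`, and the identity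
`1/(μ - λ) + 1/λ = μ/(λ(μ - λ))` together with the first moment of `ν` gives
`|g(λ) + (∫ν)/λ| ≤ (∫|ν(μ)||μ| dμ)/(|λ| |Im λ|)`. Once `|g| ≤ 1`, `|exp g - 1 - g| ≤ |g|²`, so on the
ray `λ = it` both error terms are `O(1/t²)`.
-/

noncomputable def cauchyTransform (ν : ℝ → ℂ) (lam : ℂ) : ℂ := ∫ μ : ℝ, ν μ / (μ - lam)

lemma abs_im_le_norm_ofReal_sub (μ : ℝ) (lam : ℂ) : |lam.im| ≤ ‖(μ : ℂ) - lam‖ := by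
  simpa using abs_im_le_norm ((μ : ℂ) - lam)

lemma ofReal_sub_ne_zero {lam : ℂ} (hlam : lam.im ≠ 0) (μ : ℝ) : (μ : ℂ) - lam ≠ 0 :=
  fun h => hlam (by simpa using congrArg Complex.im h)

section CauchyTransform

variable {ν : ℝ → ℂ} {lam : ℂ}

lemma norm_div_ofReal_sub_le (hlam : lam.im ≠ 0) (μ : ℝ) :
    ‖ν μ / (μ - lam)‖ ≤ ‖ν μ‖ / |lam.im| := by
  rw [norm_div]
  gcongr
  exact abs_im_le_norm_ofReal_sub μ lam

lemma integrable_div_ofReal_sub (hν : Integrable ν) (hlam : lam.im ≠ 0) :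
    Integrable fun μ : ℝ => ν μ / (μ - lam) := by
  refine (hν.norm.div_const _).mono' ?_ (ae_of_all _ (norm_div_ofReal_sub_le hlam))
  simp_rw [div_eq_mul_inv]
  exact hν.aestronglyMeasurable.mul
    (Continuous.inv₀ (by fun_prop) (ofReal_sub_ne_zero hlam)).aestronglyMeasurable

lemma norm_cauchyTransform_le (hν : Integrable ν) (hlam : lam.im ≠ 0) :
    ‖cauchyTransform ν lam‖ ≤ (∫ μ, ‖ν μ‖) / |lam.im| := by
  rw [← integral_div]
  exact norm_integral_le_of_norm_le (hν.norm.div_const _)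
    (ae_of_all _ (norm_div_ofReal_sub_le hlam))

lemma cauchyTransform_add_integral_div (hν : Integrable ν) (hlam : lam.im ≠ 0) :
    cauchyTransform ν lam + (∫ μ, ν μ) / lam = ∫ μ : ℝ, ν μ * μ / (lam * (μ - lam)) := by
  have hlam0 : lam ≠ 0 := fun h => hlam (by simp [h])
  rw [cauchyTransform, ← integral_div, ← integral_add (integrable_div_ofReal_sub hν hlam)
    (hν.div_const _)]
  congr 1 with μ
  have := ofReal_sub_ne_zero hlam μ
  field_simp
  ring

lemma norm_cauchyTransform_add_integral_div_le (hν : Integrable ν)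
    (hν₁ : Integrable fun μ : ℝ => ‖ν μ‖ * |μ|) (hlam : lam.im ≠ 0) :
    ‖cauchyTransform ν lam + (∫ μ, ν μ) / lam‖ ≤
      (∫ μ, ‖ν μ‖ * |μ|) / (‖lam‖ * |lam.im|) := by
  have hlam0 : lam ≠ 0 := fun h => hlam (by simp [h])
  rw [cauchyTransform_add_integral_div hν hlam, ← integral_div]
  refine norm_integral_le_of_norm_le (hν₁.div_const _) (ae_of_all _ fun μ => ?_)
  rw [norm_div, norm_mul, norm_mul, norm_real, Real.norm_eq_abs]
  gcongr
  exact abs_im_le_norm_ofReal_sub μ lam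

lemma norm_exp_cauchyTransform_sub_one_add_integral_div_le (hν : Integrable ν) (hν₁ : Integrable fun μ : ℝ => ‖ν μ‖ * |μ|) (hlam : lam.im ≠ 0)
    (hmass : ∫ μ, ‖ν μ‖ ≤ |lam.im|) :
    ‖exp (cauchyTransform ν lam) - 1 + (∫ μ, ν μ) / lam‖ ≤
      ((∫ μ, ‖ν μ‖) / |lam.im|) ^ 2 + (∫ μ, ‖ν μ‖ * |μ|) / (‖lam‖ * |lam.im|) := by
  set g := cauchyTransform ν lam
  have hg : ‖g‖ ≤ (∫ μ, ‖ν μ‖) / |lam.im| := norm_cauchyTransform_le hν hlam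
  have hg1 : ‖g‖ ≤ 1 := hg.trans (div_le_one_of_le₀ hmass (abs_nonneg _))
  calc ‖exp g - 1 + (∫ μ, ν μ) / lam‖
      = ‖(exp g - 1 - g) + (g + (∫ μ, ν μ) / lam)‖ := by ring_nf
    _ ≤ ‖g‖ ^ 2 + ‖g + (∫ μ, ν μ) / lam‖ :=
      (norm_add_le _ _).trans (add_le_add_left (norm_exp_sub_one_sub_id_le hg1) _)
    _ ≤ _ := by
      gcongr
      exact norm_cauchyTransform_add_integral_div_le hν hν₁ hlam

end CauchyTransform

theorem alpha_asymptotics_general (ν : ℝ → ℂ)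
    (hint : Integrable ν)
    (hint1 : Integrable (fun μ : ℝ => ‖ν μ‖ * |μ|))
    (α : ℂ → ℂ)
    (hα : ∀ lam : ℂ, 0 < lam.im →
      α lam = Complex.exp (∫ μ : ℝ, ν μ / (μ - lam)))
    (α₁ : ℂ) (hα₁ : α₁ = -∫ μ : ℝ, ν μ) :
    ∃ C : ℝ, ∃ T : ℝ, 0 < T ∧ ∀ t : ℝ, T ≤ t →
      ‖(t : ℂ)^2 * (α (Complex.I * t) - 1 - α₁ / (Complex.I * t))‖ ≤ C := by
  set N := ∫ μ, ‖ν μ‖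
  set M := ∫ μ, ‖ν μ‖ * |μ|
  refine ⟨N ^ 2 + M, max 1 N, one_pos.trans_le (le_max_left _ _), fun t ht => ?_⟩
  have ht0 : 0 < t := one_pos.trans_le ((le_max_left _ _).trans ht)
  have him : (I * t).im = t := by simp
  have hnorm : ‖I * t‖ = t := by simp [ht0.le]
  have hbound := norm_exp_cauchyTransform_sub_one_add_integral_div_le (lam := I * t) hint hint1
    (by rw [him]; exact ht0.ne') (by rw [him, abs_of_pos ht0]; exact (le_max_right _ _).trans ht)
  rw [him, hnorm, abs_of_pos ht0] at hbound
  rw [hα _ (him.symm ▸ ht0), hα₁, norm_mul, norm_pow, norm_real, Real.norm_eq_abs, sq_abs, neg_div,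
    sub_neg_eq_add]
  calc t ^ 2 * ‖exp (cauchyTransform ν (I * t)) - 1 + (∫ μ, ν μ) / (I * t)‖
      ≤ t ^ 2 * ((N / t) ^ 2 + M / (t * t)) := by gcongr
    _ = N ^ 2 + M := by field_simp

theorem alpha_asymptotics (ν : ℝ → ℂ) (hcont : Continuous ν)
    (hint : Integrable ν)
    (hint1 : Integrable (fun μ : ℝ => ‖ν μ‖ * |μ|))
    (α : ℂ → ℂ)
    (hα : ∀ lam : ℂ, 0 < lam.im →
      α lam = Complex.exp (∫ μ : ℝ, ν μ / (μ - lam)))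
    (α₁ : ℂ) (hα₁ : α₁ = -∫ μ : ℝ, ν μ) :
    ∃ C : ℝ, ∃ T : ℝ, 0 < T ∧ ∀ t : ℝ, T ≤ t →
      ‖(t : ℂ)^2 * (α (Complex.I * t) - 1 - α₁ / (Complex.I * t))‖ ≤ C :=
  alpha_asymptotics_general ν hint hint1 α hα α₁ hα₁
end

section
/- Let 0 < ζ < π with π/ζ irrational, and F(λ) = sinh(λ(π/2−ζ))/sinh(λπ/2) (extended continuously at zeros of the denominator where the limit exists). The solutions of 1 + F(λ) = 0 in the open upper half-plane are exactly the points λ = 2πi(j+1)/(π−ζ) and λ = πi(2j+1)/ζ for integers j ≥ 0, excluding any such point where sinh(λπ/2) = 0. -/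
open Real Complex

/-!
By the sum-to-product formula, `sinh(λπ/2) + sinh(λ(π/2 - ζ)) = 2 sinh(λ(π - ζ)/2) cosh(λζ/2)`,
so away from the zeros of `sinh(λπ/2)` the roots are the zeros of the two factors; in the upper
half-plane these are `2πi(j+1)/(π - ζ)` and `πi(2j+1)/ζ`.
-/

namespace Complex

theorem sinh_add_sinh (x y : ℂ) :
    sinh x + sinh y = 2 * sinh ((x + y) / 2) * cosh ((x - y) / 2) := by
  have hx := sinh_add ((x + y) / 2) ((x - y) / 2)
  have hy := sinh_sub ((x + y) / 2) ((x - y) / 2)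
  rw [show (x + y) / 2 + (x - y) / 2 = x by ring] at hx
  rw [show (x + y) / 2 - (x - y) / 2 = y by ring] at hy
  linear_combination hx + hy

theorem sinh_eq_zero_iff {z : ℂ} : sinh z = 0 ↔ ∃ k : ℤ, z = k * π * I := by
  rw [← mul_left_inj' I_ne_zero, zero_mul, ← sin_mul_I, sin_eq_zero_iff]
  constructor <;> rintro ⟨k, hk⟩ <;> refine ⟨-k, ?_⟩ <;> push_cast
  · linear_combination (-I) * hk + z * I_sq
  · rw [hk]; linear_combination (k * π) * I_sq

theorem cosh_eq_zero_iff {z : ℂ} : cosh z = 0 ↔ ∃ k : ℤ, z = (2 * k + 1) * π / 2 * I := by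
  rw [← cos_mul_I, cos_eq_zero_iff]
  constructor <;> rintro ⟨k, hk⟩ <;> refine ⟨-k - 1, ?_⟩ <;> push_cast
  · linear_combination (-I) * hk + z * I_sq
  · rw [hk]; linear_combination ((2 * k + 1) * π / 2) * I_sq

theorem one_add_sinh_div_sinh_eq_zero_iff {a b : ℂ} (ha : sinh a ≠ 0) :
    1 + sinh b / sinh a = 0 ↔ sinh ((a + b) / 2) = 0 ∨ cosh ((a - b) / 2) = 0 := by
  rw [← div_self ha, ← add_div, div_eq_zero_iff, or_iff_left ha, sinh_add_sinh,
    mul_eq_zero, mul_eq_zero, or_iff_right two_ne_zero]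

theorem pos_of_mul_ofReal_eq_ofReal_mul_I {z : ℂ} {c a : ℝ} (hz : 0 < z.im) (hc : 0 < c)
    (h : z * c = a * I) : 0 < a := by
  have := congrArg im h
  simp only [mul_im, ofReal_re, ofReal_im, mul_zero, add_zero, I_re, I_im, mul_one] at this
  rw [← this]
  positivity

variable {z : ℂ} {c : ℝ}

theorem sinh_mul_div_two_eq_zero_iff (hz : 0 < z.im) (hc : 0 < c) :
    sinh (z * c / 2) = 0 ↔ ∃ j : ℕ, z = 2 * π * I * (j + 1) / c := by
  have hc' : (c : ℂ) ≠ 0 := ofReal_ne_zero.mpr hc.ne'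
  rw [sinh_eq_zero_iff]
  constructor
  · rintro ⟨k, hk⟩
    have hk_pos : 0 < k := by
      have h := pos_of_mul_ofReal_eq_ofReal_mul_I (a := 2 * k * π) hz hc
        (by push_cast; linear_combination 2 * hk)
      exact_mod_cast pos_of_mul_pos_right (pos_of_mul_pos_left h pi_pos.le) zero_le_two
    obtain ⟨j, rfl⟩ := Int.eq_succ_of_zero_lt hk_pos
    refine ⟨j, ?_⟩
    field_simp
    push_cast at hk
    linear_combination 2 * hk
  · rintro ⟨j, rfl⟩
    exact ⟨j + 1, by push_cast; field_simp⟩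

theorem cosh_mul_div_two_eq_zero_iff (hz : 0 < z.im) (hc : 0 < c) :
    cosh (z * c / 2) = 0 ↔ ∃ j : ℕ, z = π * I * (2 * j + 1) / c := by
  have hc' : (c : ℂ) ≠ 0 := ofReal_ne_zero.mpr hc.ne'
  rw [cosh_eq_zero_iff]
  constructor
  · rintro ⟨k, hk⟩
    have hk_nonneg : 0 ≤ k := by
      have h := pos_of_mul_ofReal_eq_ofReal_mul_I (a := (2 * k + 1) * π) hz hc
        (by push_cast; linear_combination 2 * hk)
      have : (0 : ℝ) < 2 * k + 1 := pos_of_mul_pos_left h pi_pos.le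
      have : 0 < 2 * k + 1 := by exact_mod_cast this
      omega
    obtain ⟨j, rfl⟩ := Int.eq_ofNat_of_zero_le hk_nonneg
    refine ⟨j, ?_⟩
    field_simp
    push_cast at hk
    linear_combination 2 * hk
  · rintro ⟨j, rfl⟩
    exact ⟨j, by push_cast; field_simp⟩

end Complex

theorem roots_XXZ_general (ζ : ℝ) (hζ : 0 < ζ) (hζπ : ζ < π) :
    ∀ lam : ℂ, 0 < lam.im →
      ((Complex.sinh (lam * π / 2) ≠ 0 ∧
          1 + Complex.sinh (lam * (π / 2 - ζ)) / Complex.sinh (lam * π / 2) = 0) ↔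
        ((∃ j : ℕ,
            lam = 2 * π * Complex.I * (j + 1) / ((π : ℂ) - ζ) ∨
            lam = π * Complex.I * (2 * j + 1) / (ζ : ℂ)) ∧
          Complex.sinh (lam * π / 2) ≠ 0)) := by
  intro lam hlam
  refine and_comm.trans (and_congr_left fun hs => ?_)
  have hsinh := sinh_mul_div_two_eq_zero_iff hlam (sub_pos.mpr hζπ)
  have hcosh := cosh_mul_div_two_eq_zero_iff hlam hζ
  push_cast at hsinh
  rw [one_add_sinh_div_sinh_eq_zero_iff hs, exists_or, ← hsinh, ← hcosh,
    show (lam * π / 2 + lam * (π / 2 - ζ)) / 2 = lam * (π - ζ) / 2 by ring,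
    show (lam * π / 2 - lam * (π / 2 - ζ)) / 2 = lam * ζ / 2 by ring]

theorem roots_XXZ (ζ : ℝ) (hζ : 0 < ζ) (hζπ : ζ < π)
    (hirr : Irrational (π / ζ)) :
    ∀ lam : ℂ, 0 < lam.im →
      ((Complex.sinh (lam * π / 2) ≠ 0 ∧
          1 + Complex.sinh (lam * (π / 2 - ζ)) / Complex.sinh (lam * π / 2) = 0) ↔
        ((∃ j : ℕ,
            lam = 2 * π * Complex.I * (j + 1) / ((π : ℂ) - ζ) ∨
            lam = π * Complex.I * (2 * j + 1) / (ζ : ℂ)) ∧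
          Complex.sinh (lam * π / 2) ≠ 0)) :=
  roots_XXZ_general ζ hζ hζπ
end

section
/- Let n⁺ ≤ n⁻, and let A⁻ be an n⁺×n⁻ matrix with entries A⁻_{jk} = u_k/(q⁺ⱼ − q⁻ₖ) and A⁺ an n⁻×n⁺ matrix with entries A⁺_{kj} = v_j/(q⁻ₖ − q⁺ⱼ), where u_k, v_j ∈ ℂ and all q⁺ⱼ, q⁻ₖ are distinct with q⁺ⱼ ≠ q⁻ₖ. Then det(I − A⁻A⁺) = Σ_{n=0}^{n⁺} Σ_{j₁<⋯<jₙ ≤ n⁺} Σ_{k₁<⋯<kₙ ≤ n⁻} (∏_{a=1}^{n} u_{k_a} v_{j_a}) · (det_{a,b} 1/(q⁺_{j_a} − q⁻_{k_b}))². -/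
/-!
Write `1 - A⁻A⁺ = 1 + A⁻(-A⁺)`. By multilinearity of the determinant in the rows,
`det (1 + M)` is the sum of the principal minors `det M[j, j]` over increasing tuples `j`, and by
Cauchy–Binet `det (A⁻(-A⁺))[j, j]` is the sum over increasing tuples `k` of
`det A⁻[j, k] · det (-A⁺)[k, j]`. Both factors are the Cauchy determinant
`det (1 / (q⁺_{j_a} - q⁻_{k_b}))`, with its columns scaled by the `u_{k_b}` and, after
transposing, its rows scaled by the `v_{j_a}`.
-/

open Finset Matrix

open scoped Classical

section

variable {κ : Type*} [Fintype κ] [LinearOrder κ] {β : Type*} [AddCommMonoid β]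

theorem Finset.sum_filter_strictMono_eq_sum_powersetCard (n : ℕ) (g : Finset κ → β) :
    ∑ j ∈ univ.filter (fun j : Fin n → κ => StrictMono j), g (univ.image j) =
      ∑ s ∈ univ.powersetCard n, g s := by
  refine sum_bij (fun j _ => univ.image j) (fun j hj => ?_) (fun j hj j' hj' h => ?_)
    (fun s hs => ?_) fun _ _ => rfl
  · rw [mem_filter] at hj
    simp [mem_powersetCard, card_image_of_injective _ hj.2.injective]
  · rw [mem_filter] at hj hj'
    rw [← hj.2.range_inj hj'.2, ← Set.image_univ, ← Set.image_univ, ← coe_univ, ← coe_image,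
      ← coe_image, h]
  · obtain ⟨-, hcard⟩ := mem_powersetCard.mp hs
    exact ⟨s.orderEmbOfFin hcard, by simp [(s.orderEmbOfFin hcard).strictMono], by simp⟩

/-- Every injective tuple is uniquely an increasing tuple composed with a permutation. -/
theorem Finset.sum_filter_injective_eq_sum_strictMono_perm (n : ℕ) (T : (Fin n → κ) → β) :
    ∑ p ∈ univ.filter (fun p : Fin n → κ => Function.Injective p), T p =
      ∑ k ∈ univ.filter (fun k : Fin n → κ => StrictMono k),
        ∑ σ : Equiv.Perm (Fin n), T (k ∘ σ) := by
  rw [← sum_product']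
  symm
  refine sum_bij (fun q _ => q.1 ∘ q.2) (fun q hq => ?_) (fun q hq q' hq' h => ?_)
    (fun p hp => ?_) fun _ _ => rfl
  · simp only [mem_product, mem_filter, mem_univ, true_and, and_true] at hq ⊢
    exact hq.injective.comp q.2.injective
  · obtain ⟨k, σ⟩ := q
    obtain ⟨k', σ'⟩ := q'
    simp only [mem_product, mem_filter, mem_univ, true_and, and_true] at hq hq' h
    have hσ : k ∘ σ ∘ σ.symm = k := by ext; simp
    have hσ' : k ∘ σ ∘ σ'.symm = k' := by rw [← Function.comp_assoc, h]; ext; simp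
    have hkk' : k = k' := by
      have := Tuple.unique_monotone (f := k ∘ σ) (σ := σ.symm) (τ := σ'.symm)
        (by rw [Function.comp_assoc, hσ]; exact hq.monotone)
        (by rw [Function.comp_assoc, hσ']; exact hq'.monotone)
      rwa [Function.comp_assoc, Function.comp_assoc, hσ, hσ'] at this
    subst hkk'
    exact Prod.ext rfl (Equiv.ext fun i => hq.injective (congrFun h i))
  · rw [mem_filter] at hp
    refine ⟨(p ∘ Tuple.sort p, (Tuple.sort p).symm), ?_, ?_⟩
    · simpa [mem_product] using
        (Tuple.monotone_sort p).strictMono_of_injective (hp.2.comp (Tuple.sort p).injective)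
    · ext; simp

end

section

variable {R : Type*} [CommRing R] {ι : Type*} [Fintype ι] [DecidableEq ι]

theorem Matrix.det_one_add_eq_sum_det_submatrix (M : Matrix ι ι R) :
    det (1 + M) = ∑ s : Finset ι, det (M.submatrix ((↑) : s → ι) (↑)) := by
  rw [add_comm]
  change detRowAlternating (M.row + (1 : Matrix ι ι R).row) = _
  rw [(detRowAlternating : (ι → R) [⋀^ι]→ₗ[R] R).map_add_univ]
  exact sum_congr rfl fun s _ => det_piecewise_one_eq_submatrix_det M s

theorem Matrix.det_mul_eq_sum_prod_mul_det_submatrix {κ : Type*} [Fintype κ] (B : Matrix ι κ R)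
    (C : Matrix κ ι R) :
    det (B * C) = ∑ p : ι → κ, (∏ i, B i (p i)) * det (C.submatrix p id) := by
  let D := (detRowAlternating : (ι → R) [⋀^ι]→ₗ[R] R).toMultilinearMap
  have hrows : (B * C).row = fun i => ∑ x, B i x • C.row x := by
    ext; simp [mul_apply, Finset.sum_apply]
  calc det (B * C) = D (fun i => ∑ x, B i x • C.row x) := by rw [← hrows]; rfl
    _ = ∑ p : ι → κ, D fun i => B i (p i) • C.row (p i) := D.map_sum _
    _ = _ := sum_congr rfl fun p _ => by rw [D.map_smul_univ, smul_eq_mul]; rfl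

end

section

variable {R : Type*} [CommRing R] {κ : Type*} [Fintype κ] [LinearOrder κ]

theorem Matrix.det_one_add_eq_sum_det_submatrix_strictMono (M : Matrix κ κ R) :
    det (1 + M) = ∑ n ∈ range (Fintype.card κ + 1),
      ∑ j ∈ univ.filter (fun j : Fin n → κ => StrictMono j), det (M.submatrix j j) := by
  rw [det_one_add_eq_sum_det_submatrix, ← powerset_univ, sum_powerset, card_univ]
  refine sum_congr rfl fun n _ => ?_
  rw [← sum_filter_strictMono_eq_sum_powersetCard]
  refine sum_congr rfl fun j hmem => ?_
  have hj : StrictMono j := (mem_filter.mp hmem).2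
  set s := univ.image j
  have hcard : s.card = n := by simp [s, card_image_of_injective _ hj.injective]
  have hjs : j = s.orderEmbOfFin hcard := orderEmbOfFin_unique hcard (by simp [s]) hj
  rw [← det_submatrix_equiv_self (s.orderIsoOfFin hcard).toEquiv, submatrix_submatrix, hjs]
  rfl

/-- The Cauchy–Binet formula. -/
theorem Matrix.det_mul_eq_sum_det_submatrix_strictMono {n : ℕ} (B : Matrix (Fin n) κ R)
    (C : Matrix κ (Fin n) R) :
    det (B * C) = ∑ k ∈ univ.filter (fun k : Fin n → κ => StrictMono k),
      det (B.submatrix id k) * det (C.submatrix k id) := by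
  have hnoninj : ∀ p : Fin n → κ, ¬ Function.Injective p → det (C.submatrix p id) = 0 := by
    intro p hp
    simp only [Function.Injective, not_forall] at hp
    obtain ⟨a, b, hpab, hab⟩ := hp
    exact det_zero_of_row_eq hab (by ext; simp [hpab])
  have hperm : ∀ (k : Fin n → κ) (σ : Equiv.Perm (Fin n)),
      det (C.submatrix (k ∘ σ) id) = Equiv.Perm.sign σ * det (C.submatrix k id) :=
    fun k σ => det_permute σ (C.submatrix k id)
  have hminor : ∀ k : Fin n → κ, det (B.submatrix id k) =
      ∑ σ : Equiv.Perm (Fin n), Equiv.Perm.sign σ * ∏ i, B i (k (σ i)) := fun k => by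
    rw [← det_transpose, det_apply']; rfl
  rw [det_mul_eq_sum_prod_mul_det_submatrix,
    ← sum_filter_of_ne (p := fun p : Fin n → κ => Function.Injective p) fun p _ h => ?_,
    sum_filter_injective_eq_sum_strictMono_perm]
  · refine sum_congr rfl fun k _ => ?_
    simp only [hperm, hminor, sum_mul, Function.comp_apply]
    exact sum_congr rfl fun σ _ => by ring
  · exact not_imp_comm.mp (hnoninj p) (right_ne_zero_of_mul h)

end

open scoped Classical in
theorem det_expansion_general (np nm : ℕ)
    (qp : Fin np → ℂ) (qm : Fin nm → ℂ) (u : Fin nm → ℂ) (v : Fin np → ℂ)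
    (Am : Matrix (Fin np) (Fin nm) ℂ) (Ap : Matrix (Fin nm) (Fin np) ℂ)
    (hAm : ∀ j k, Am j k = u k / (qp j - qm k))
    (hAp : ∀ k j, Ap k j = v j / (qm k - qp j)) :
    Matrix.det (1 - Am * Ap) =
      ∑ n ∈ Finset.range (np + 1),
        ∑ j ∈ Finset.univ.filter (fun j : Fin n → Fin np => StrictMono j),
          ∑ k ∈ Finset.univ.filter (fun k : Fin n → Fin nm => StrictMono k),
            (∏ a : Fin n, u (k a) * v (j a)) *
              (Matrix.det (Matrix.of fun a b : Fin n =>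
                1 / (qp (j a) - qm (k b)))) ^ 2 := by
  rw [sub_eq_add_neg, ← Matrix.mul_neg, det_one_add_eq_sum_det_submatrix_strictMono,
    Fintype.card_fin]
  refine sum_congr rfl fun n _ => sum_congr rfl fun j _ => ?_
  rw [submatrix_mul _ _ _ _ _ Function.bijective_id, det_mul_eq_sum_det_submatrix_strictMono]
  refine sum_congr rfl fun k _ => ?_
  set D := of fun a b : Fin n => 1 / (qp (j a) - qm (k b))
  have hAmD : (Am.submatrix j id).submatrix id k = of fun a b => u (k b) * D a b := by
    ext a b
    simp only [submatrix_apply, id_eq, of_apply, D, hAm]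
    ring
  have hApD : ((-Ap).submatrix id j).submatrix k id = (of fun a b => v (j a) * D a b)ᵀ := by
    ext a b
    simp only [submatrix_apply, id_eq, transpose_apply, of_apply, D]
    rw [Matrix.neg_apply, hAp, ← neg_sub (qp _), div_neg, neg_neg]
    ring
  rw [hAmD, hApD, det_transpose, det_mul_row, det_mul_column, prod_mul_distrib]
  ring

open scoped Classical in
theorem det_expansion (np nm : ℕ) (hle : np ≤ nm)
    (qp : Fin np → ℂ) (qm : Fin nm → ℂ) (u : Fin nm → ℂ) (v : Fin np → ℂ)
    (hqp : Function.Injective qp) (hqm : Function.Injective qm)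
    (hne : ∀ j k, qp j ≠ qm k)
    (Am : Matrix (Fin np) (Fin nm) ℂ) (Ap : Matrix (Fin nm) (Fin np) ℂ)
    (hAm : ∀ j k, Am j k = u k / (qp j - qm k))
    (hAp : ∀ k j, Ap k j = v j / (qm k - qp j)) :
    Matrix.det (1 - Am * Ap) =
      ∑ n ∈ Finset.range (np + 1),
        ∑ j ∈ Finset.univ.filter (fun j : Fin n → Fin np => StrictMono j),
          ∑ k ∈ Finset.univ.filter (fun k : Fin n → Fin nm => StrictMono k),
            (∏ a : Fin n, u (k a) * v (j a)) *
              (Matrix.det (Matrix.of fun a b : Fin n =>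
                1 / (qp (j a) - qm (k b)))) ^ 2 :=
  det_expansion_general np nm qp qm u v Am Ap hAm hAp
end
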